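/- arXiv:1310.0409 — 2 statements merged into one kernel-verified Lean document; each statement's English description precedes it below -/
import Mathlib

section
/- Let X be a first countable topological space. Then w(X) = ona-w(X). -/
open Cardinal Set

universe u

/-- `V` is an open neighborhood assignment for `X`: each `V x` is an open set
containing `x`. -/
def IsONA {X : Type u} [TopologicalSpace X] (V : X → Set X) : Prop :=
  ∀ x, IsOpen (V x) ∧ x ∈ V x

/-- The weight of `X`: `ℵ₀` plus the least cardinality of a base for `X`. -/
noncomputable def weight (X : Type u) [TopologicalSpace X] : Cardinal.{u} :=
  Cardinal.aleph0 + sInf {c : Cardinal.{u} |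
    ∃ B : Set (Set X), TopologicalSpace.IsTopologicalBasis B ∧ #B = c}

/-- The ona-weight of `X`: `ℵ₀` plus the least cardinal `κ` such that every open
neighborhood assignment has an open neighborhood assignment refinement whose range has
cardinality at most `κ`. -/
noncomputable def onaWeight (X : Type u) [TopologicalSpace X] : Cardinal.{u} :=
  Cardinal.aleph0 + sInf {κ : Cardinal.{u} |
    ∀ V : X → Set X, IsONA V →
      ∃ W : X → Set X, IsONA W ∧ (∀ x, W x ⊆ V x) ∧ #(Set.range W) ≤ κ}

/-!
In a first countable space fix a decreasing neighbourhood base `(U x n)ₙ` at each point `x`.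
If every open neighbourhood assignment has a refinement taking at most `κ` values, refining
`x ↦ interior (U x n)` for every `n` gives at most `ℵ₀ · κ` open sets, and together they form a
base. Conversely, a base `B` refines every open neighbourhood assignment using only members of `B`.
-/

open TopologicalSpace

def HasONARefinementsOfCardLE (X : Type u) [TopologicalSpace X] (κ : Cardinal.{u}) : Prop :=
  ∀ V : X → Set X, IsONA V →
    ∃ W : X → Set X, IsONA W ∧ (∀ x, W x ⊆ V x) ∧ #(Set.range W) ≤ κ

variable {X : Type u} [TopologicalSpace X]

theorem onaWeight_eq_aleph0_add_sInf :
    onaWeight X = ℵ₀ + sInf {κ | HasONARefinementsOfCardLE X κ} :=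
  rfl

theorem weight_le_aleph0_add_mk {B : Set (Set X)} (hB : IsTopologicalBasis B) :
    weight X ≤ ℵ₀ + #B := by
  unfold weight
  gcongr
  exact csInf_le (OrderBot.bddBelow _) ⟨B, hB, rfl⟩

theorem TopologicalSpace.IsTopologicalBasis.hasONARefinementsOfCardLE {B : Set (Set X)}
    (hB : IsTopologicalBasis B) : HasONARefinementsOfCardLE X #B := by
  intro V hV
  choose W hWB hxW hWV using fun x => hB.exists_subset_of_mem_open (hV x).2 (hV x).1
  exact ⟨W, fun x => ⟨hB.isOpen (hWB x), hxW x⟩, hWV,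
    mk_le_mk_of_subset (range_subset_iff.2 hWB)⟩

theorem onaWeight_le_weight : onaWeight X ≤ weight X := by
  rw [onaWeight_eq_aleph0_add_sInf, weight]
  gcongr with c
  · exact ⟨_, _, isTopologicalBasis_opens, rfl⟩
  · rintro ⟨B, hB, rfl⟩
    exact hB.hasONARefinementsOfCardLE

theorem exists_hasONARefinementsOfCardLE_onaWeight_eq :
    ∃ κ, HasONARefinementsOfCardLE X κ ∧ onaWeight X = ℵ₀ + κ :=
  ⟨_, csInf_mem (s := {κ | HasONARefinementsOfCardLE X κ})
    ⟨_, isTopologicalBasis_opens.hasONARefinementsOfCardLE⟩, rfl⟩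

theorem exists_isTopologicalBasis_mk_le_aleph0_mul [FirstCountableTopology X]
    {κ : Cardinal.{u}} (hκ : HasONARefinementsOfCardLE X κ) :
    ∃ B : Set (Set X), IsTopologicalBasis B ∧ #B ≤ ℵ₀ * κ := by
  choose U hU using fun x : X => (nhds x).exists_antitone_basis
  have hUn (x : X) (n : ℕ) : interior (U x n) ∈ nhds x :=
    interior_mem_nhds.2 ((hU x).mem n)
  choose W hW hWU hWcard using fun n : ℕ =>
    hκ (fun x => interior (U x n)) fun x => ⟨isOpen_interior, mem_of_mem_nhds (hUn x n)⟩
  refine ⟨⋃ n : ULift.{u} ℕ, range (W n.down), ?_, ?_⟩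
  · refine isTopologicalBasis_of_isOpen_of_nhds ?_ fun x O hxO hO => ?_
    · simp only [mem_iUnion, mem_range]
      rintro _ ⟨n, x, rfl⟩
      exact (hW n.down x).1
    obtain ⟨n, -, hn⟩ := (hU x).toHasBasis.mem_iff.1 (hO.mem_nhds hxO)
    exact ⟨W n x, mem_iUnion.2 ⟨⟨n⟩, mem_range_self x⟩, (hW n x).2,
      (hWU n x).trans (interior_subset.trans hn)⟩
  · calc #(⋃ n : ULift.{u} ℕ, range (W n.down))
        ≤ #(ULift.{u} ℕ) * ⨆ n : ULift.{u} ℕ, #(range (W n.down)) := mk_iUnion_le _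
      _ ≤ ℵ₀ * κ := by
        rw [mk_uLift, mk_nat, lift_aleph0]
        gcongr
        exact ciSup_le' fun n => hWcard n.down

theorem Cardinal.aleph0_add_aleph0_mul (κ : Cardinal) : ℵ₀ + ℵ₀ * κ = ℵ₀ + κ := by
  refine le_antisymm ?_ (add_le_add_right (le_mul_left aleph0_ne_zero) _)
  rw [add_eq_max le_rfl, add_eq_max le_rfl]
  exact max_le (le_max_left _ _) ((mul_le_max _ _).trans (by simp))

theorem weight_le_onaWeight [FirstCountableTopology X] : weight X ≤ onaWeight X := by
  obtain ⟨κ, hκ, hκX⟩ := exists_hasONARefinementsOfCardLE_onaWeight_eq (X := X)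
  obtain ⟨B, hB, hBκ⟩ := exists_isTopologicalBasis_mk_le_aleph0_mul hκ
  calc weight X ≤ ℵ₀ + #B := weight_le_aleph0_add_mk hB
    _ ≤ ℵ₀ + ℵ₀ * κ := add_le_add_right hBκ _
    _ = onaWeight X := by rw [aleph0_add_aleph0_mul, hκX]

/-- For every first countable topological space `X`, `w(X) = ona-w(X)`. -/
theorem stmt14 (X : Type u) [TopologicalSpace X] [FirstCountableTopology X] :
    weight X = onaWeight X :=
  weight_le_onaWeight.antisymm onaWeight_le_weight
end

section
/- Let X be a topological space. Then d(X) ≤ ona-d(X) · χ(X), where · is cardinal multiplication. -/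
open Cardinal Set

universe u

/-- The density of `X`: `ℵ₀` plus the least cardinality of a dense subset of `X`. -/
noncomputable def density (X : Type u) [TopologicalSpace X] : Cardinal.{u} :=
  Cardinal.aleph0 + sInf {c : Cardinal.{u} | ∃ D : Set X, Dense D ∧ #D = c}

/-- The character of `X`: `ℵ₀` plus the least cardinal `κ` such that every point has a
local base of cardinality at most `κ`. -/
noncomputable def character (X : Type u) [TopologicalSpace X] : Cardinal.{u} :=
  Cardinal.aleph0 + sInf {κ : Cardinal.{u} |
    ∀ x : X, ∃ B : Set (Set X),
      (∀ V ∈ B, IsOpen V ∧ x ∈ V) ∧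
      (∀ U : Set X, IsOpen U → x ∈ U → ∃ V ∈ B, V ⊆ U) ∧ #B ≤ κ}

/-- The ona-density of `X`: `ℵ₀` plus the least cardinal `κ` such that for every open
neighborhood assignment `(V_x)_{x∈X}` there is `D ⊆ X` with `|D| ≤ κ` meeting every
`V_x`. -/
noncomputable def onaDensity (X : Type u) [TopologicalSpace X] : Cardinal.{u} :=
  Cardinal.aleph0 + sInf {κ : Cardinal.{u} |
    ∀ V : X → Set X, IsONA V →
      ∃ D : Set X, #D ≤ κ ∧ ∀ x, (D ∩ V x).Nonempty}

/-!
Index the local bases of all points by one set `I` of size `χ(X)`, so that for each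
`i ∈ I` the `i`-th basic neighbourhoods form an open neighbourhood assignment. Each of
these assignments is met by a set `D i` of size at most `ona-d(X)`, and `⋃ i, D i` is
dense: any open `U ∋ x` contains some basic neighbourhood `V i x`, which meets `D i`.
-/

section CardinalFunctions

variable {X : Type u} [TopologicalSpace X]

theorem aleph0_le_onaDensity : ℵ₀ ≤ onaDensity X :=
  self_le_add_right _ _

theorem aleph0_le_character : ℵ₀ ≤ character X :=
  self_le_add_right _ _

theorem density_le_aleph0_add_mk {D : Set X} (hD : Dense D) : density X ≤ ℵ₀ + #D := by
  unfold density
  gcongr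
  exact csInf_le' ⟨D, hD, rfl⟩

theorem exists_mk_le_onaDensity_inter_nonempty {V : X → Set X} (hV : IsONA V) :
    ∃ D : Set X, #D ≤ onaDensity X ∧ ∀ x, (D ∩ V x).Nonempty := by
  have hmem := csInf_mem (s := {κ : Cardinal.{u} | ∀ V : X → Set X, IsONA V →
      ∃ D : Set X, #D ≤ κ ∧ ∀ x, (D ∩ V x).Nonempty})
    (by exact ⟨#X, fun V hV => ⟨univ, mk_univ.le, fun x => ⟨x, mem_univ x, (hV x).2⟩⟩⟩)
  obtain ⟨D, hDcard, hDV⟩ := hmem V hV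
  exact ⟨D, hDcard.trans (self_le_add_left _ _), hDV⟩

theorem exists_localBase_mk_le_character (x : X) :
    ∃ B : Set (Set X), (∀ V ∈ B, IsOpen V ∧ x ∈ V) ∧
      (∀ U : Set X, IsOpen U → x ∈ U → ∃ V ∈ B, V ⊆ U) ∧ #B ≤ character X := by
  have hmem := csInf_mem (s := {κ : Cardinal.{u} | ∀ x : X, ∃ B : Set (Set X),
      (∀ V ∈ B, IsOpen V ∧ x ∈ V) ∧
      (∀ U : Set X, IsOpen U → x ∈ U → ∃ V ∈ B, V ⊆ U) ∧ #B ≤ κ})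
    (by exact ⟨#(Set X), fun x => ⟨{U | IsOpen U ∧ x ∈ U}, fun _ hV => hV,
      fun U hU hx => ⟨U, ⟨hU, hx⟩, subset_rfl⟩, mk_set_le _⟩⟩)
  obtain ⟨B, hBopen, hBbase, hBcard⟩ := hmem x
  exact ⟨B, hBopen, hBbase, hBcard.trans (self_le_add_left _ _)⟩

theorem exists_indexed_localBases {I : Type u} (hI : character X ≤ #I) :
    ∃ V : I → X → Set X, (∀ i, IsONA (V i)) ∧
      ∀ x U, IsOpen U → x ∈ U → ∃ i, V i x ⊆ U := by
  choose B hBopen hBbase hBcard using exists_localBase_mk_le_character (X := X)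
  have hsurj (x : X) : ∃ s : I → B x, Function.Surjective s := by
    obtain ⟨V, hV, -⟩ := hBbase x univ isOpen_univ (mem_univ x)
    exact Function.exists_surjective_iff.2
      ⟨⟨fun _ => ⟨V, hV⟩⟩, (hBcard x).trans hI⟩
  choose s hs using hsurj
  refine ⟨fun i x => s x i, fun i x => hBopen x _ (s x i).2, fun x U hU hx => ?_⟩
  obtain ⟨V, hV, hVU⟩ := hBbase x U hU hx
  obtain ⟨i, hi⟩ := hs x ⟨V, hV⟩
  exact ⟨i, by simpa [hi] using hVU⟩

theorem dense_iUnion_of_inter_nonempty {ι : Type*} {V : ι → X → Set X}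
    (hV : ∀ x U, IsOpen U → x ∈ U → ∃ i, V i x ⊆ U) {D : ι → Set X}
    (hD : ∀ i x, (D i ∩ V i x).Nonempty) : Dense (⋃ i, D i) := by
  refine dense_iff_inter_open.2 fun U hU ⟨x, hx⟩ => ?_
  obtain ⟨i, hiU⟩ := hV x U hU hx
  obtain ⟨d, hdD, hdV⟩ := hD i x
  exact ⟨d, hiU hdV, mem_iUnion.2 ⟨i, hdD⟩⟩

end CardinalFunctions

/-- For every topological space `X`, `d(X) ≤ ona-d(X) · χ(X)`. -/
theorem stmt15 (X : Type u) [TopologicalSpace X] :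
    density X ≤ onaDensity X * character X := by
  obtain ⟨V, hONA, hbase⟩ := exists_indexed_localBases (mk_out (character X)).ge
  choose D hDcard hDV using fun i => exists_mk_le_onaDensity_inter_nonempty (hONA i)
  have hbound : ℵ₀ ≤ onaDensity X * character X :=
    aleph0_le_onaDensity.trans (le_mul_right (aleph0_pos.trans_le aleph0_le_character).ne')
  have hcard : #(⋃ i, D i) ≤ onaDensity X * character X :=
    calc #(⋃ i, D i) ≤ #(character X).out * ⨆ i, #(D i) := mk_iUnion_le _
      _ ≤ character X * onaDensity X := mul_le_mul' (mk_out _).le (ciSup_le' hDcard)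
      _ = onaDensity X * character X := mul_comm _ _
  calc density X ≤ ℵ₀ + #(⋃ i, D i) :=
        density_le_aleph0_add_mk (dense_iUnion_of_inter_nonempty hbase hDV)
    _ ≤ onaDensity X * character X := add_le_of_le hbound hbound hcard
end
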